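/- arXiv:2304.04406 — 4 statements merged into one kernel-verified Lean document; each statement's English description precedes it below -/
import Mathlib

section
/- Elimination theorem of BATC: for every closed BATC term p there exists a basic BATC term q such that BATC ⊢ p = q. -/
/-!
STATEMENT 1 (Elimination theorem of BATC): for every closed BATC term `p` there
is a basic BATC term `q` such that BATC ⊢ p = q.
-/

/-- Closed BATC terms over a set `E` of atomic actions: constants `0` (deadlock)
and `1` (empty action), atomic actions, alternative composition `+` (`alt`) and
sequential composition `·` (`seq`). -/
inductive BATC (E : Type) : Type
  | zero : BATC E
  | one  : BATC E
  | atom : E → BATC E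
  | alt  : BATC E → BATC E → BATC E
  | seq  : BATC E → BATC E → BATC E

namespace BATC

variable {E : Type}

/-- Derivability `BATC ⊢ p = q` in the equational theory of BATC: the axioms
A1–A9 (stated schematically, hence closed under substitution), closed under
equivalence (reflexivity, symmetry, transitivity) and under contexts
(congruence for `+` and `·`). -/
inductive Eqv : BATC E → BATC E → Prop
  | a1 (x y : BATC E) : Eqv (alt x y) (alt y x)
  | a2 (x y z : BATC E) : Eqv (alt (alt x y) z) (alt x (alt y z))
  | a3 (x : BATC E) : Eqv (alt x x) x
  | a4 (x y z : BATC E) : Eqv (seq (alt x y) z) (alt (seq x z) (seq y z))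
  | a5 (x y z : BATC E) : Eqv (seq (seq x y) z) (seq x (seq y z))
  | a6 (x : BATC E) : Eqv (alt x zero) x
  | a7 (x : BATC E) : Eqv (seq zero x) zero
  | a8 (x : BATC E) : Eqv (seq one x) x
  | a9 (x : BATC E) : Eqv (seq x one) x
  | refl (x : BATC E) : Eqv x x
  | symm {x y : BATC E} : Eqv x y → Eqv y x
  | trans {x y z : BATC E} : Eqv x y → Eqv y z → Eqv x z
  | congAlt {x x' y y' : BATC E} : Eqv x x' → Eqv y y' → Eqv (alt x y) (alt x' y')
  | congSeq {x x' y y' : BATC E} : Eqv x x' → Eqv y y' → Eqv (seq x y) (seq x' y')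

/-- Basic BATC terms: `0` and `1` are basic, every atomic action is basic,
`a·t` is basic for an atomic action `a` and basic `t`, and `t+s` is basic for
basic `t`, `s`. -/
inductive Basic : BATC E → Prop
  | zero : Basic zero
  | one : Basic one
  | atom (a : E) : Basic (atom a)
  | prefixed (a : E) {t : BATC E} : Basic t → Basic (seq (atom a) t)
  | plus {t s : BATC E} : Basic t → Basic s → Basic (alt t s)

/-- Sequential composition of basic terms reduces to a basic term. -/
lemma seq_basic {p : BATC E} (hp : Basic p) :
    ∀ q : BATC E, Basic q → ∃ r : BATC E, Basic r ∧ Eqv (seq p q) r := by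
  induction hp with
  | zero => intro q _; exact ⟨zero, Basic.zero, Eqv.a7 q⟩
  | one => intro q hq; exact ⟨q, hq, Eqv.a8 q⟩
  | atom a =>
      intro q hq
      exact ⟨seq (atom a) q, Basic.prefixed a hq, Eqv.refl _⟩
  | prefixed a ht ih =>
      intro q hq
      obtain ⟨r, hr, he⟩ := ih q hq
      exact ⟨seq (atom a) r, Basic.prefixed a hr,
        Eqv.trans (Eqv.a5 _ _ _) (Eqv.congSeq (Eqv.refl _) he)⟩
  | plus ht hs iht ihs =>
      intro q hq
      obtain ⟨r1, hr1, he1⟩ := iht q hq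
      obtain ⟨r2, hr2, he2⟩ := ihs q hq
      exact ⟨alt r1 r2, Basic.plus hr1 hr2,
        Eqv.trans (Eqv.a4 _ _ _) (Eqv.congAlt he1 he2)⟩

end BATC

/-- Elimination theorem of BATC: every closed BATC term is derivably equal to a
basic BATC term. -/
theorem batc_elimination {E : Type} (p : BATC E) :
    ∃ q : BATC E, BATC.Basic q ∧ BATC.Eqv p q := by
  induction p with
  | zero => exact ⟨_, BATC.Basic.zero, BATC.Eqv.refl _⟩
  | one => exact ⟨_, BATC.Basic.one, BATC.Eqv.refl _⟩
  | atom a => exact ⟨_, BATC.Basic.atom a, BATC.Eqv.refl _⟩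
  | alt x y ihx ihy =>
      obtain ⟨qx, hqx, hex⟩ := ihx
      obtain ⟨qy, hqy, hey⟩ := ihy
      exact ⟨_, BATC.Basic.plus hqx hqy, BATC.Eqv.congAlt hex hey⟩
  | seq x y ihx ihy =>
      obtain ⟨qx, hqx, hex⟩ := ihx
      obtain ⟨qy, hqy, hey⟩ := ihy
      obtain ⟨r, hr, he⟩ := BATC.seq_basic hqx qy hqy
      exact ⟨r, hr, BATC.Eqv.trans (BATC.Eqv.congSeq hex hey) he⟩
end

section
/- Completeness of BATC modulo truly concurrent bisimulation equivalences: if p and q are closed BATC terms and p ∼p q (respectively p ∼s q, p ∼hp q, p ∼hhp q), then BATC ⊢ p = q. -/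
namespace BATC

variable {E : Type}

/-- Successful termination predicate `↓` (the rule `1 → √`). -/
def canTerm : BATC E → Prop
  | zero => False
  | one => True
  | atom _ => False
  | alt x y => canTerm x ∨ canTerm y
  | seq x y => canTerm x ∧ canTerm y

/-- The (pomset/step) transitions of a BATC term, following the structural
operational rules of BATC.  A transition is labelled by a nonempty pomset of
pairwise-concurrent events, represented by a multiset of atomic actions. -/
def trans : BATC E → Set (Multiset E × BATC E)
  | zero => ∅
  | one => ∅
  | atom a => {(({a} : Multiset E), one)}
  | alt x y => trans x ∪ trans y
  | seq x y =>
      {p | (∃ l x', (l, x') ∈ trans x ∧ p = (l, seq x' y)) ∨ (canTerm x ∧ p ∈ trans y)}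

/-- `R` is a pomset bisimulation: related states match pomset transitions (up to
pomset isomorphism, i.e. equality of the multisets of labels, all events in a
transition of a BATC term being pairwise concurrent) and termination. -/
def IsPomsetBisim (R : BATC E → BATC E → Prop) : Prop :=
  ∀ p q, R p q →
    (∀ l p', (l, p') ∈ trans p → ∃ q', (l, q') ∈ trans q ∧ R p' q') ∧
    (∀ l q', (l, q') ∈ trans q → ∃ p', (l, p') ∈ trans p ∧ R p' q') ∧
    (canTerm p ↔ canTerm q)

/-- Pomset bisimilarity `∼p`. -/
def PomsetBisim (p q : BATC E) : Prop := ∃ R, IsPomsetBisim R ∧ R p q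

/-- `R` is a step bisimulation: related states match step transitions (sets of
pairwise concurrent events, represented as multisets of labels) and
termination. -/
def IsStepBisim (R : BATC E → BATC E → Prop) : Prop :=
  ∀ p q, R p q →
    (∀ l p', (l, p') ∈ trans p → ∃ q', (l, q') ∈ trans q ∧ R p' q') ∧
    (∀ l q', (l, q') ∈ trans q → ∃ p', (l, p') ∈ trans p ∧ R p' q') ∧
    (canTerm p ↔ canTerm q)

/-- Step bisimilarity `∼s`. -/
def StepBisim (p q : BATC E) : Prop := ∃ R, IsStepBisim R ∧ R p q

/-- `R` is a history-preserving (hp-) bisimulation: related states match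
single-event transitions (maintaining the order isomorphism between the
executed histories, which for label-matched single-event extensions amounts to
extending the isomorphism by the matched pair of events) and termination. -/
def IsHpBisim (R : BATC E → BATC E → Prop) : Prop :=
  ∀ p q, R p q →
    (∀ a p', (({a} : Multiset E), p') ∈ trans p →
        ∃ q', (({a} : Multiset E), q') ∈ trans q ∧ R p' q') ∧
    (∀ a q', (({a} : Multiset E), q') ∈ trans q →
        ∃ p', (({a} : Multiset E), p') ∈ trans p ∧ R p' q') ∧
    (canTerm p ↔ canTerm q)

/-- History-preserving bisimilarity `∼hp`. -/
def HpBisim (p q : BATC E) : Prop := ∃ R, IsHpBisim R ∧ R p q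

/-- Downward closure of a (posetal) relation: whenever two states reached by
matched single events are related, the states they were reached from are
related as well. -/
def DownwardClosed (R : BATC E → BATC E → Prop) : Prop :=
  ∀ p q a p' q', (({a} : Multiset E), p') ∈ trans p →
    (({a} : Multiset E), q') ∈ trans q → R p' q' → R p q

/-- Hereditary history-preserving bisimilarity `∼hhp`: induced by downward
closed hp-bisimulations. -/
def HhpBisim (p q : BATC E) : Prop := ∃ R, IsHpBisim R ∧ DownwardClosed R ∧ R p q

end BATC

namespace BATC

variable {E : Type}

instance : Trans (Eqv (E := E)) (Eqv (E := E)) (Eqv (E := E)) := ⟨Eqv.trans⟩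

/-- Boolean termination predicate. -/
def canTermB : BATC E → Bool
  | zero => false
  | one => true
  | atom _ => false
  | alt x y => canTermB x || canTermB y
  | seq x y => canTermB x && canTermB y

theorem canTerm_iff (p : BATC E) : canTerm p ↔ canTermB p = true := by
  induction p <;> simp [canTerm, canTermB, *]

/-- Syntactic single-event derivatives. -/
def ders : BATC E → List (E × BATC E)
  | zero => []
  | one => []
  | atom a => [(a, one)]
  | alt x y => ders x ++ ders y
  | seq x y => (ders x).map (fun s => (s.1, seq s.2 y)) ++
      (if canTermB x then ders y else [])

theorem trans_char (p : BATC E) (l : Multiset E) (p' : BATC E) :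
    (l, p') ∈ trans p ↔ ∃ a, (a, p') ∈ ders p ∧ l = ({a} : Multiset E) := by
  induction p generalizing l p' with
  | zero => simp [trans, ders]
  | one => simp [trans, ders]
  | atom a =>
      simp only [trans, ders, Set.mem_singleton_iff, Prod.mk.injEq, List.mem_singleton]
      constructor
      · rintro ⟨h1, h2⟩; exact ⟨a, ⟨rfl, h2⟩, h1⟩
      · rintro ⟨b, ⟨hb, hp⟩, hl⟩; exact ⟨by rw [hl, hb], hp⟩
  | alt x y ihx ihy =>
      simp only [trans, ders, Set.mem_union, List.mem_append, ihx, ihy]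
      constructor
      · rintro (⟨a, h, rfl⟩ | ⟨a, h, rfl⟩)
        · exact ⟨a, Or.inl h, rfl⟩
        · exact ⟨a, Or.inr h, rfl⟩
      · rintro ⟨a, h | h, rfl⟩
        · exact Or.inl ⟨a, h, rfl⟩
        · exact Or.inr ⟨a, h, rfl⟩
  | seq x y ihx ihy =>
      simp only [trans, ders, Set.mem_setOf_eq, List.mem_append, List.mem_map]
      constructor
      · rintro (⟨l0, x', hx', heq⟩ | ⟨hct, hy⟩)
        · obtain ⟨a, ha, rfl⟩ := (ihx l0 x').mp hx'
          obtain ⟨rfl, rfl⟩ : l = ({a} : Multiset E) ∧ p' = seq x' y := by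
            simpa [Prod.ext_iff] using heq
          exact ⟨a, Or.inl ⟨(a, x'), ha, rfl⟩, rfl⟩
        · obtain ⟨a, ha, rfl⟩ := (ihy l p').mp hy
          refine ⟨a, Or.inr ?_, rfl⟩
          rw [if_pos ((canTerm_iff x).mp hct)]; exact ha
      · rintro ⟨a, h | h, rfl⟩
        · obtain ⟨⟨b, x'⟩, hmem, heq⟩ := h
          obtain ⟨rfl, rfl⟩ : b = a ∧ seq x' y = p' := by simpa [Prod.ext_iff] using heq
          exact Or.inl ⟨({b} : Multiset E), x', (ihx {b} x').mpr ⟨b, hmem, rfl⟩, rfl⟩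
        · by_cases hc : canTermB x = true
          · rw [if_pos hc] at h
            exact Or.inr ⟨(canTerm_iff x).mpr hc, (ihy {a} p').mpr ⟨a, h, rfl⟩⟩
          · rw [if_neg hc] at h; simp at h
  
/-- Depth measure: derivatives strictly decrease it. -/
def depth : BATC E → ℕ
  | zero => 0
  | one => 0
  | atom _ => 1
  | alt x y => max (depth x) (depth y)
  | seq x y => depth x + depth y

theorem ders_depth {p : BATC E} {a : E} {x : BATC E} (h : (a, x) ∈ ders p) :
    depth x < depth p := by
  induction p generalizing a x with
  | zero => simp [ders] at h
  | one => simp [ders] at h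
  | atom b => simp [ders] at h; simp [h.2, depth]
  | alt y z ihy ihz =>
      rcases List.mem_append.mp h with h | h
      · exact lt_of_lt_of_le (ihy h) (le_max_left _ _)
      · exact lt_of_lt_of_le (ihz h) (le_max_right _ _)
  | seq y z ihy ihz =>
      rcases List.mem_append.mp h with h | h
      · obtain ⟨⟨b, y'⟩, hmem, heq⟩ := List.mem_map.mp h
        have hx : seq y' z = x := congrArg Prod.snd heq
        have := ihy hmem
        rw [← hx]
        simp only [depth]
        omega
      · by_cases hc : canTermB y = true
        · rw [if_pos hc] at h
          have := ihz h
          simp only [depth]; omega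
        · rw [if_neg hc] at h; simp at h

/-- Sum of a list of prefixed summands over a base. -/
def sumL (L : List (E × BATC E)) (b : BATC E) : BATC E :=
  L.foldr (fun s acc => alt (seq (atom s.1) s.2) acc) b

def bse (p : BATC E) : BATC E := if canTermB p then one else zero

def hnf (p : BATC E) : BATC E := sumL (ders p) (bse p)

theorem sumL_append (L1 L2 : List (E × BATC E)) (b : BATC E) :
    sumL (L1 ++ L2) b = sumL L1 (sumL L2 b) := List.foldr_append ..

theorem sumL_cong {b b' : BATC E} (L : List (E × BATC E)) (h : Eqv b b') :
    Eqv (sumL L b) (sumL L b') := by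
  induction L with
  | nil => exact h
  | cons s L ih => exact Eqv.congAlt (Eqv.refl _) ih

theorem alt_into (L : List (E × BATC E)) (b t : BATC E) :
    Eqv (alt (sumL L b) t) (sumL L (alt b t)) := by
  induction L with
  | nil => exact Eqv.refl _
  | cons s L ih => exact (Eqv.a2 ..).trans (Eqv.congAlt (Eqv.refl _) ih)

theorem alt_sum_sum {b1 b2 b3 : BATC E} (L1 L2 : List (E × BATC E))
    (h : Eqv (alt b1 b2) b3) :
    Eqv (alt (sumL L1 b1) (sumL L2 b2)) (sumL L1 (sumL L2 b3)) := by
  refine (alt_into L1 b1 _).trans (sumL_cong L1 ?_)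
  refine ((Eqv.a1 ..).trans (alt_into L2 b2 b1)).trans (sumL_cong L2 ?_)
  exact (Eqv.a1 ..).trans h

theorem seq_distrib (L : List (E × BATC E)) (b y : BATC E) :
    Eqv (seq (sumL L b) y)
      (sumL (L.map (fun s => (s.1, seq s.2 y))) (seq b y)) := by
  induction L with
  | nil => exact Eqv.refl _
  | cons s L ih => exact (Eqv.a4 ..).trans (Eqv.congAlt (Eqv.a5 ..) ih)

theorem mem_absorb {L : List (E × BATC E)} {a : E} {x : BATC E} (b : BATC E)
    (h : (a, x) ∈ L) :
    Eqv (alt (seq (atom a) x) (sumL L b)) (sumL L b) := by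
  induction L with
  | nil => simp at h
  | cons s L ih =>
      rcases List.mem_cons.mp h with h | h
      · rw [← h]
        exact ((Eqv.a2 ..).symm).trans (Eqv.congAlt (Eqv.a3 _) (Eqv.refl _))
      · exact (((Eqv.a2 ..).symm.trans (Eqv.congAlt (Eqv.a1 ..) (Eqv.refl _))).trans
          (Eqv.a2 ..)).trans (Eqv.congAlt (Eqv.refl _) (ih h))

theorem absorb_all {L2 L1 : List (E × BATC E)} (b : BATC E)
    (h : ∀ a x, (a, x) ∈ L2 → ∃ x', (a, x') ∈ L1 ∧ Eqv x' x) :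
    Eqv (alt (sumL L2 zero) (sumL L1 b)) (sumL L1 b) := by
  induction L2 with
  | nil => exact (Eqv.a1 ..).trans (Eqv.a6 _)
  | cons s L2 ih =>
      obtain ⟨x', hx', he⟩ := h s.1 s.2 (List.mem_cons_self ..)
      exact (((Eqv.a2 ..).trans
          (Eqv.congAlt (Eqv.refl _) (ih (fun a x hm => h a x (List.mem_cons_of_mem _ hm))))).trans
        (Eqv.congAlt (Eqv.congSeq (Eqv.refl _) he.symm) (Eqv.refl _))).trans (mem_absorb b hx')

theorem sumL_base_split (L : List (E × BATC E)) (b : BATC E) :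
    Eqv (sumL L b) (alt (sumL L zero) b) := by
  induction L with
  | nil => exact ((Eqv.a1 ..).trans (Eqv.a6 _)).symm
  | cons s L ih => exact ((Eqv.congAlt (Eqv.refl _) ih).trans (Eqv.a2 ..).symm)

theorem base_absorb (L : List (E × BATC E)) (b : BATC E) :
    Eqv (alt (sumL L b) b) (sumL L b) := by
  induction L with
  | nil => exact Eqv.a3 _
  | cons s L ih => exact (Eqv.a2 ..).trans (Eqv.congAlt (Eqv.refl _) ih)

/-- Head normal form expansion: every term is provably equal to its hnf. -/
theorem expansion (p : BATC E) : Eqv p (hnf p) := by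
  induction p with
  | zero => exact Eqv.refl _
  | one => exact Eqv.refl _
  | atom a => exact ((Eqv.a9 _).symm).trans (Eqv.a6 _).symm
  | alt x y ihx ihy =>
      have hb : Eqv (alt (bse x) (bse y)) (bse (alt x y)) := by
        simp only [bse, canTermB]
        by_cases hx : canTermB x = true <;> by_cases hy : canTermB y = true <;>
          simp [hx, hy]
        all_goals first
          | exact Eqv.a3 _
          | exact Eqv.a6 _
          | exact (Eqv.a1 ..).trans (Eqv.a6 _)
      have : hnf (alt x y) = sumL (ders x) (sumL (ders y) (bse (alt x y))) := by
        rw [hnf, ders, sumL_append]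
      rw [this]
      exact (Eqv.congAlt ihx ihy).trans (alt_sum_sum (ders x) (ders y) hb)
  | seq x y ihx ihy =>
      have h1 : Eqv (seq x y)
          (sumL ((ders x).map (fun s => (s.1, seq s.2 y))) (seq (bse x) y)) :=
        (Eqv.congSeq ihx (Eqv.refl _)).trans (seq_distrib ..)
      cases hx : canTermB x
      · refine h1.trans ?_
        have : hnf (seq x y) = sumL ((ders x).map (fun s => (s.1, seq s.2 y))) zero := by
          rw [hnf, ders, bse, canTermB, hx, if_neg (by simp), sumL_append]
          simp [sumL]
        rw [this]
        refine sumL_cong _ ?_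
        rw [bse, hx, if_neg (by simp)]
        exact Eqv.a7 _
      · refine h1.trans ?_
        have : hnf (seq x y) =
            sumL ((ders x).map (fun s => (s.1, seq s.2 y))) (sumL (ders y) (bse y)) := by
          rw [hnf, ders, hx, if_pos rfl, sumL_append]
          congr 1
          rw [bse, bse, canTermB, hx, Bool.true_and]
        rw [this]
        refine sumL_cong _ ?_
        rw [bse, hx, if_pos rfl]
        exact (Eqv.a8 _).trans ihy

theorem hp_eqv : ∀ (n : ℕ) (p q : BATC E), depth p < n → HpBisim p q → Eqv p q := by
  intro n
  induction n with
  | zero => intro p q h _; omega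
  | succ n ih =>
      rintro p q hd ⟨R, hR, hpq⟩
      obtain ⟨h1, h2, h3⟩ := hR p q hpq
      have m1 : ∀ a x, (a, x) ∈ ders p → ∃ y, (a, y) ∈ ders q ∧ Eqv y x := by
        intro a x hx
        obtain ⟨q', hq', hr⟩ := h1 a x ((trans_char p {a} x).mpr ⟨a, hx, rfl⟩)
        obtain ⟨b, hb, hlb⟩ := (trans_char q {a} q').mp hq'
        have hab : a = b := Multiset.singleton_inj.mp hlb
        have hdx : depth x < n := lt_of_lt_of_le (ders_depth hx) (Nat.lt_succ_iff.mp hd)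
        refine ⟨q', by rw [hab]; exact hb, (ih x q' hdx ⟨R, hR, hr⟩).symm⟩
      have m2 : ∀ a y, (a, y) ∈ ders q → ∃ x, (a, x) ∈ ders p ∧ Eqv x y := by
        intro a y hy
        obtain ⟨p', hp', hr⟩ := h2 a y ((trans_char q {a} y).mpr ⟨a, hy, rfl⟩)
        obtain ⟨b, hb, hlb⟩ := (trans_char p {a} p').mp hp'
        have hab : a = b := Multiset.singleton_inj.mp hlb
        have hb' : (a, p') ∈ ders p := by rw [hab]; exact hb
        have hdx : depth p' < n :=
          lt_of_lt_of_le (ders_depth hb') (Nat.lt_succ_iff.mp hd)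
        exact ⟨p', hb', ih p' y hdx ⟨R, hR, hr⟩⟩
      have hbse : bse p = bse q := by
        have h3' := h3
        rw [canTerm_iff, canTerm_iff] at h3'
        rw [bse, bse, Bool.eq_iff_iff.mpr h3']
      have absorb : ∀ (L1 L2 : List (E × BATC E)) (b : BATC E),
          (∀ a x, (a, x) ∈ L2 → ∃ x', (a, x') ∈ L1 ∧ Eqv x' x) →
          Eqv (alt (sumL L1 b) (sumL L2 b)) (sumL L1 b) := by
        intro L1 L2 b hm
        refine ((Eqv.congAlt (Eqv.refl _) (sumL_base_split L2 b)).trans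
          ((Eqv.a2 ..).symm.trans ?_))
        exact (Eqv.congAlt ((Eqv.a1 ..).trans (absorb_all b hm)) (Eqv.refl _)).trans (base_absorb L1 b)
      have k1 : Eqv (alt (hnf p) (hnf q)) (hnf p) := by
        rw [hnf, hnf, ← hbse]; exact absorb _ _ _ m2
      have k2 : Eqv (alt (hnf q) (hnf p)) (hnf q) := by
        rw [hnf, hnf, hbse]; exact absorb _ _ _ m1
      exact (((expansion p).trans (k1.symm.trans ((Eqv.a1 ..).trans k2)))).trans
        (expansion q).symm

theorem hp_eqv' (p q : BATC E) (h : HpBisim p q) : Eqv p q :=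
  hp_eqv (depth p + 1) p q (Nat.lt_succ_self _) h

end BATC

/-- Completeness of BATC modulo truly concurrent bisimulation equivalences:
for closed BATC terms p, q, if p ∼p q (resp. p ∼s q, p ∼hp q, p ∼hhp q) then
BATC ⊢ p = q. -/
theorem batc_completeness {E : Type} :
    (∀ p q : BATC E, BATC.PomsetBisim p q → BATC.Eqv p q) ∧
    (∀ p q : BATC E, BATC.StepBisim p q → BATC.Eqv p q) ∧
    (∀ p q : BATC E, BATC.HpBisim p q → BATC.Eqv p q) ∧
    (∀ p q : BATC E, BATC.HhpBisim p q → BATC.Eqv p q) := by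
  have hp : ∀ p q : BATC E, BATC.HpBisim p q → BATC.Eqv p q := BATC.hp_eqv'
  refine ⟨fun p q ⟨R, hR, h⟩ => ?_, fun p q ⟨R, hR, h⟩ => ?_, hp,
    fun p q ⟨R, hR, _, h⟩ => hp p q ⟨R, hR, h⟩⟩
  · refine hp p q ⟨R, fun p q hpq => ?_, h⟩
    obtain ⟨c1, c2, c3⟩ := hR p q hpq
    exact ⟨fun a p' hh => c1 {a} p' hh, fun a q' hh => c2 {a} q' hh, c3⟩
  · refine hp p q ⟨R, fun p q hpq => ?_, h⟩
    obtain ⟨c1, c2, c3⟩ := hR p q hpq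
    exact ⟨fun a p' hh => c1 {a} p' hh, fun a q' hh => c2 {a} q' hh, c3⟩
end

section
/- Structurization of N-shape: an N-shape cannot be structurized; that is, the prime event structure with four events a, b, c, d, causality relation generated by a ≤ b, c ≤ d and a ≤ d, and empty conflict relation, is not a structured PES (it does not lie in the least class of PESs containing all single-event PESs and closed under sequential, alternative and parallel composition). -/
/-!
STATEMENT 4 (Structurization of N-shape): the prime event structure with four
events a, b, c, d, causality generated by a ≤ b, c ≤ d, a ≤ d, and empty
conflict, is not structured, i.e. it does not lie in the least class of event
structures containing all single-event structures and closed under sequential,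
alternative and parallel composition (of structures with disjoint event sets).
-/

/-- An event structure over a universe `U` of events: a set of events together
with a causality relation and a conflict relation on them. -/
structure ES (U : Type) where
  events : Set U
  le : U → U → Prop
  conf : U → U → Prop

namespace ES

variable {U : Type}

/-- The single-event PES consisting of one event `e` (with the trivial partial
order and no conflicts). -/
def single (e : U) : ES U :=
  ⟨{e}, fun x y => x = e ∧ y = e, fun _ _ => False⟩

/-- Sequential composition `E₁ · E₂`: events 𝔼₁ ∪ 𝔼₂, causality
≤₁ ∪ ≤₂ ∪ (𝔼₁ × 𝔼₂), conflict ♯₁ ∪ ♯₂. -/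
def seqC (A B : ES U) : ES U :=
  ⟨A.events ∪ B.events,
   fun x y => A.le x y ∨ B.le x y ∨ (x ∈ A.events ∧ y ∈ B.events),
   fun x y => A.conf x y ∨ B.conf x y⟩

/-- Alternative composition `E₁ + E₂`: events 𝔼₁ ∪ 𝔼₂, causality ≤₁ ∪ ≤₂,
conflict ♯₁ ∪ ♯₂ ∪ (𝔼₁ × 𝔼₂) (symmetrized). -/
def altC (A B : ES U) : ES U :=
  ⟨A.events ∪ B.events,
   fun x y => A.le x y ∨ B.le x y,
   fun x y => A.conf x y ∨ B.conf x y ∨ (x ∈ A.events ∧ y ∈ B.events) ∨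
     (y ∈ A.events ∧ x ∈ B.events)⟩

/-- Parallel composition `E₁ ∥ E₂`: events 𝔼₁ ∪ 𝔼₂, causality ≤₁ ∪ ≤₂,
conflict ♯₁ ∪ ♯₂ (no new causalities or conflicts). -/
def parC (A B : ES U) : ES U :=
  ⟨A.events ∪ B.events,
   fun x y => A.le x y ∨ B.le x y,
   fun x y => A.conf x y ∨ B.conf x y⟩

/-- Structured PESs: the least class of event structures containing all
single-event structures and closed under sequential, alternative and parallel
composition of structures with disjoint sets of events. -/
inductive Structured : ES U → Prop
  | single (e : U) : Structured (single e)
  | seq {A B : ES U} : Structured A → Structured B → Disjoint A.events B.events →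
      Structured (seqC A B)
  | alt {A B : ES U} : Structured A → Structured B → Disjoint A.events B.events →
      Structured (altC A B)
  | par {A B : ES U} : Structured A → Structured B → Disjoint A.events B.events →
      Structured (parC A B)

/-- The N-shape: four events a, b, c, d, with the causality relation the
reflexive closure (on the four events) of a ≤ b, c ≤ d and a ≤ d, and no
conflicts. -/
def Nshape (a b c d : U) : ES U :=
  ⟨{a, b, c, d},
   fun x y => (x ∈ ({a, b, c, d} : Set U) ∧ x = y) ∨
     (x = a ∧ y = b) ∨ (x = c ∧ y = d) ∨ (x = a ∧ y = d),
   fun _ _ => False⟩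

end ES

/-- In a structured ES, the causality relation only relates events. -/
lemma structured_le_mem {U : Type} {E : ES U} (h : ES.Structured E) :
    ∀ x y, E.le x y → x ∈ E.events ∧ y ∈ E.events := by
  induction h with
  | single e =>
    rintro x y ⟨rfl, rfl⟩
    exact ⟨rfl, rfl⟩
  | @seq A B hA hB hd ihA ihB =>
    rintro x y (h | h | ⟨hx, hy⟩)
    · exact ⟨Or.inl (ihA x y h).1, Or.inl (ihA x y h).2⟩
    · exact ⟨Or.inr (ihB x y h).1, Or.inr (ihB x y h).2⟩
    · exact ⟨Or.inl hx, Or.inr hy⟩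
  | @alt A B hA hB hd ihA ihB =>
    rintro x y (h | h)
    · exact ⟨Or.inl (ihA x y h).1, Or.inl (ihA x y h).2⟩
    · exact ⟨Or.inr (ihB x y h).1, Or.inr (ihB x y h).2⟩
  | @par A B hA hB hd ihA ihB =>
    rintro x y (h | h)
    · exact ⟨Or.inl (ihA x y h).1, Or.inl (ihA x y h).2⟩
    · exact ⟨Or.inr (ihB x y h).1, Or.inr (ihB x y h).2⟩

/-- N-freeness of structured ESs: if `a ≤ b`, `c ≤ d`, `a ≤ d` with `a ≠ b`,
then there must be a further causality `c ≤ b`, `a ≤ c` or `b ≤ d`. -/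
lemma structured_nfree {U : Type} {E : ES U} (h : ES.Structured E) :
    ∀ a b c d, E.le a b → E.le c d → E.le a d → a ≠ b →
      E.le c b ∨ E.le a c ∨ E.le b d := by
  induction h with
  | single e =>
    rintro a b c d ⟨rfl, rfl⟩ _ _ hab
    exact absurd rfl hab
  | @seq A B hA hB hd ihA ihB =>
    intro a b c d h1 h2 h3 hab
    have memA := structured_le_mem hA
    have memB := structured_le_mem hB
    have dj : ∀ x, x ∈ A.events → x ∉ B.events := fun x hx =>
      Set.disjoint_left.mp hd hx
    rcases h1 with h1 | h1 | ⟨ha, hb⟩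
    · -- a, b ∈ A
      obtain ⟨ha, hb⟩ := memA a b h1
      rcases h3 with h3 | h3 | ⟨_, hdB⟩
      · -- d ∈ A
        have hdA := (memA a d h3).2
        rcases h2 with h2 | h2 | ⟨_, hdB⟩
        · rcases ihA a b c d h1 h2 h3 hab with h | h | h
          · exact Or.inl (Or.inl h)
          · exact Or.inr (Or.inl (Or.inl h))
          · exact Or.inr (Or.inr (Or.inl h))
        · exact absurd (memB c d h2).2 (dj d hdA)
        · exact absurd hdB (dj d hdA)
      · exact absurd (memB a d h3).1 (dj a ha)
      · -- d ∈ B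
        rcases h2 with h2 | h2 | ⟨hcA, _⟩
        · exact absurd hdB (dj d (memA c d h2).2)
        · exact Or.inr (Or.inr (Or.inr (Or.inr ⟨hb, hdB⟩)))
        · exact Or.inr (Or.inr (Or.inr (Or.inr ⟨hb, hdB⟩)))
    · -- a, b ∈ B
      obtain ⟨ha, hb⟩ := memB a b h1
      rcases h3 with h3 | h3 | ⟨haA, _⟩
      · exact absurd ha (dj a (memA a d h3).1)
      · -- d ∈ B
        have hdB := (memB a d h3).2
        rcases h2 with h2 | h2 | ⟨hcA, _⟩
        · exact absurd hdB (dj d (memA c d h2).2)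
        · rcases ihB a b c d h1 h2 h3 hab with h | h | h
          · exact Or.inl (Or.inr (Or.inl h))
          · exact Or.inr (Or.inl (Or.inr (Or.inl h)))
          · exact Or.inr (Or.inr (Or.inr (Or.inl h)))
        · exact Or.inl (Or.inr (Or.inr ⟨hcA, hb⟩))
      · exact absurd ha (dj a haA)
    · -- a ∈ A, b ∈ B
      rcases h3 with h3 | h3 | ⟨_, hdB⟩
      · -- d ∈ A
        have hdA := (memA a d h3).2
        rcases h2 with h2 | h2 | ⟨_, hdB⟩
        · exact Or.inl (Or.inr (Or.inr ⟨(memA c d h2).1, hb⟩))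
        · exact absurd (memB c d h2).2 (dj d hdA)
        · exact absurd hdB (dj d hdA)
      · exact absurd (memB a d h3).1 (dj a ha)
      · -- d ∈ B
        rcases h2 with h2 | h2 | ⟨hcA, _⟩
        · exact absurd hdB (dj d (memA c d h2).2)
        · exact Or.inr (Or.inl (Or.inr (Or.inr ⟨ha, (memB c d h2).1⟩)))
        · exact Or.inl (Or.inr (Or.inr ⟨hcA, hb⟩))
  | @alt A B hA hB hd ihA ihB =>
    intro a b c d h1 h2 h3 hab
    have memA := structured_le_mem hA
    have memB := structured_le_mem hB
    have dj : ∀ x, x ∈ A.events → x ∉ B.events := fun x hx =>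
      Set.disjoint_left.mp hd hx
    rcases h1 with h1 | h1
    · have ha := (memA a b h1).1
      rcases h3 with h3 | h3
      · have hdA := (memA a d h3).2
        rcases h2 with h2 | h2
        · rcases ihA a b c d h1 h2 h3 hab with h | h | h
          · exact Or.inl (Or.inl h)
          · exact Or.inr (Or.inl (Or.inl h))
          · exact Or.inr (Or.inr (Or.inl h))
        · exact absurd (memB c d h2).2 (dj d hdA)
      · exact absurd (memB a d h3).1 (dj a ha)
    · have ha := (memB a b h1).1
      rcases h3 with h3 | h3
      · exact absurd (memA a d h3).1 (fun h => dj a h ha)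
      · have hdB := (memB a d h3).2
        rcases h2 with h2 | h2
        · exact absurd hdB (dj d (memA c d h2).2)
        · rcases ihB a b c d h1 h2 h3 hab with h | h | h
          · exact Or.inl (Or.inr h)
          · exact Or.inr (Or.inl (Or.inr h))
          · exact Or.inr (Or.inr (Or.inr h))
  | @par A B hA hB hd ihA ihB =>
    intro a b c d h1 h2 h3 hab
    have memA := structured_le_mem hA
    have memB := structured_le_mem hB
    have dj : ∀ x, x ∈ A.events → x ∉ B.events := fun x hx =>
      Set.disjoint_left.mp hd hx
    rcases h1 with h1 | h1
    · have ha := (memA a b h1).1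
      rcases h3 with h3 | h3
      · have hdA := (memA a d h3).2
        rcases h2 with h2 | h2
        · rcases ihA a b c d h1 h2 h3 hab with h | h | h
          · exact Or.inl (Or.inl h)
          · exact Or.inr (Or.inl (Or.inl h))
          · exact Or.inr (Or.inr (Or.inl h))
        · exact absurd (memB c d h2).2 (dj d hdA)
      · exact absurd (memB a d h3).1 (dj a ha)
    · have ha := (memB a b h1).1
      rcases h3 with h3 | h3
      · exact absurd (memA a d h3).1 (fun h => dj a h ha)
      · have hdB := (memB a d h3).2
        rcases h2 with h2 | h2
        · exact absurd hdB (dj d (memA c d h2).2)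
        · rcases ihB a b c d h1 h2 h3 hab with h | h | h
          · exact Or.inl (Or.inr h)
          · exact Or.inr (Or.inl (Or.inr h))
          · exact Or.inr (Or.inr (Or.inr h))

/-- Structurization of N-shape: an N-shape cannot be structurized. -/
theorem nshape_not_structured {U : Type} (a b c d : U)
    (hab : a ≠ b) (hac : a ≠ c) (had : a ≠ d) (hbc : b ≠ c) (hbd : b ≠ d)
    (hcd : c ≠ d) :
    ¬ ES.Structured (ES.Nshape a b c d) := by
  intro h
  have key := structured_nfree h a b c d
    (Or.inr (Or.inl ⟨rfl, rfl⟩))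
    (Or.inr (Or.inr (Or.inl ⟨rfl, rfl⟩)))
    (Or.inr (Or.inr (Or.inr ⟨rfl, rfl⟩))) hab
  rcases key with h | h | h <;> simp only [ES.Nshape, Set.mem_insert_iff,
    Set.mem_singleton_iff] at h <;>
  · rcases h with ⟨_, h⟩ | ⟨h1, h2⟩ | ⟨h1, h2⟩ | ⟨h1, h2⟩ <;> simp_all
end

section
/- Extended Milner's expansion law: in every concurrent Kleene algebra with communication, for all atomic actions a, b ∈ 𝔼 one has a ≬ b = a·b + b·a + a∥b + a|b. -/
/-!
STATEMENT 8 (Extended Milner's expansion law): in every concurrent Kleene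
algebra with communication, for all atomic actions a, b ∈ 𝔼 one has
a ≬ b = a·b + b·a + a∥b + a|b.
-/

/-- A concurrent Kleene algebra with communication: a tuple
`(𝔼, +, ·, *, ∥, †, ≬, |, 0, 1)` together with a distinguished set of atomic
actions and a communication function `γ` on them, satisfying the axioms
A1–A15, P1–P14 and C1–C8 (where `x ⪯ y` abbreviates `x + y = y`). -/
structure CKA (A : Type) where
  add : A → A → A               -- +
  mul : A → A → A               -- ·
  star : A → A                  -- *
  par : A → A → A               -- ∥
  pstar : A → A                 -- †
  conc : A → A → A              -- ≬
  comm : A → A → A              -- |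
  zero : A                      -- 0
  one : A                       -- 1
  atoms : Set A                 -- the atomic actions 𝔼
  gamma : A → A → A             -- the communication function γ
  A1 : ∀ x y, add x y = add y x
  A2 : ∀ x y z, add x (add y z) = add (add x y) z
  A3 : ∀ x, add x x = x
  A4 : ∀ x y z, mul (add x y) z = add (mul x z) (mul y z)
  A5 : ∀ x y z, mul x (add y z) = add (mul x y) (mul x z)
  A6 : ∀ x y z, mul x (mul y z) = mul (mul x y) z
  A7 : ∀ x, add x zero = x
  A8 : ∀ x, mul zero x = zero
  A9 : ∀ x, mul x zero = zero
  A10 : ∀ x, mul x one = x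
  A11 : ∀ x, mul one x = x
  P1 : ∀ x y, conc x y = add (par x y) (comm x y)
  P2 : ∀ x y, par x y = par y x
  P3 : ∀ x y z, par x (par y z) = par (par x y) z
  P4 : ∀ x y z, par (add x y) z = add (par x z) (par y z)
  P5 : ∀ x y z, par x (add y z) = add (par x y) (par x z)
  P6 : ∀ x y z h, add (mul (par x y) (conc z h)) (par (mul x z) (mul y h)) =
      par (mul x z) (mul y h)
  P7 : ∀ x, par x zero = zero
  P8 : ∀ x, par zero x = zero
  P9 : ∀ x, par x one = x
  P10 : ∀ x, par one x = x
  C1 : ∀ x y, comm x y = comm y x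
  C2 : ∀ x y z, comm (add x y) z = add (comm x z) (comm y z)
  C3 : ∀ x y z, comm x (add y z) = add (comm x y) (comm x z)
  C4 : ∀ a b x y, a ∈ atoms → b ∈ atoms →
      add (mul (gamma a b) (conc x y)) (comm (mul a x) (mul b y)) =
        comm (mul a x) (mul b y)
  C5 : ∀ x, comm x zero = zero
  C6 : ∀ x, comm zero x = zero
  C7 : ∀ x, comm x one = zero
  C8 : ∀ x, comm one x = zero
  A12 : ∀ x, add one (mul x (star x)) = star x
  A13 : ∀ x, add one (mul (star x) x) = star x
  A14 : ∀ x y z, add (add x (mul y z)) z = z → add (mul (star y) x) z = z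
  A15 : ∀ x y z, add (add x (mul y z)) y = y → add (mul x (star z)) y = y
  P11 : ∀ x, add one (par x (pstar x)) = pstar x
  P12 : ∀ x, add one (par (pstar x) x) = pstar x
  P13 : ∀ x y z, add (add x (par y z)) z = z → add (par (pstar y) x) z = z
  P14 : ∀ x y z, add (add x (par y z)) y = y → add (par x (pstar z)) y = y

/-- Extended Milner's expansion law: for all atomic actions a, b ∈ 𝔼,
a ≬ b = a·b + b·a + a∥b + a|b. -/
theorem cka_extended_milner_expansion {A : Type} (C : CKA A)
    (a b : A) (ha : a ∈ C.atoms) (hb : b ∈ C.atoms) :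
    C.conc a b =
      C.add (C.add (C.add (C.mul a b) (C.mul b a)) (C.par a b)) (C.comm a b) := by
  have hab := C.P6 a C.one C.one b
  simp only [C.P9, C.P10, C.P1, C.C7, C.C8, C.A7, C.A10, C.A11] at hab
  have hba := C.P6 C.one b a C.one
  simp only [C.P9, C.P10, C.P1, C.C7, C.C8, C.A7, C.A10, C.A11] at hba
  rw [C.P1]
  congr 1
  rw [← C.A2, hba, hab]
end
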